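/- Let G be a finite normal form game with strict preferences and let σ* be a no-harm equilibrium of Γ(a₀,k,I) whose outcome a' is different from the initial reference point a₀. Then u_i(a') > u_i(a₀) for every player i ∈ N; in particular, a' Pareto dominates a₀ and every player is strictly better off at a' than at a₀. -/

import Mathlib

namespace NoHarm

/-- A finite normal form game with `n` players: finite action sets `A i`,
nonempty, with decidable equality, and utility functions `u i : Profile → ℝ`. -/
structure Game (n : ℕ) where
  A : Fin n → Type
  fintypeA : ∀ i, Fintype (A i)
  decA : ∀ i, DecidableEq (A i)
  neA : ∀ i, Nonempty (A i)
  u : Fin n → (∀ i, A i) → ℝ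

attribute [instance] Game.fintypeA Game.decA Game.neA

/-- Action profiles of `G`. -/
abbrev Profile {n : ℕ} (G : Game n) : Type := ∀ i, G.A i

/-- A recorded move in the extensive form game `Γ`: the acting player together
with their choice (`none` = pass, `some a` = choose action `a`; choosing the
current component of the state is "staying", any other action is "moving"). -/
abbrev Move {n : ℕ} (G : Game n) : Type := Σ i : Fin n, Option (G.A i)

/-- A node of `Γ`, identified with the history of moves leading to it
(the root is `[]`). -/
abbrev Hist {n : ℕ} (G : Game n) : Type := List (Move G)

variable {n : ℕ}

/-- One step of the left fold computing, along a history, the triple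
(current state, current reference point, player who established the current
reference point by staying -- `none` for the initial reference point). -/
def stepFold (G : Game n) (x : Profile G × Profile G × Option (Fin n)) (m : Move G) :
    Profile G × Profile G × Option (Fin n) :=
  match m with
  | ⟨_, none⟩ => x
  | ⟨i, some a⟩ =>
    if a = x.1 i then (x.1, x.1, some i)
    else (Function.update x.1 i a, x.2.1, x.2.2)

/-- The (state, reference point, proposer) data at the node `h` of `Γ(a0,·,·)`. -/
def fold3 (G : Game n) (a0 : Profile G) (h : Hist G) :
    Profile G × Profile G × Option (Fin n) :=
  h.foldl (stepFold G) (a0, a0, none)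

/-- The state `S(x)` at a node. -/
def state (G : Game n) (a0 : Profile G) (h : Hist G) : Profile G := (fold3 G a0 h).1

/-- The reference point at a node (the most recent state at which a player
stayed, initially `a0`). -/
def refpt (G : Game n) (a0 : Profile G) (h : Hist G) : Profile G := (fold3 G a0 h).2.1

/-- The player who established the current reference point by staying
(`none` if it is still the initial reference point `a0`). -/
def proposer (G : Game n) (a0 : Profile G) (h : Hist G) : Option (Fin n) :=
  (fold3 G a0 h).2.2

/-- `m` is a stay action at the node `h`: the mover chooses exactly the
component of the current state belonging to them. -/
def IsStay (G : Game n) (a0 : Profile G) (h : Hist G) (m : Move G) : Prop :=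
  m.2 = some (state G a0 h m.1)

/-- Termination condition (i): one player stayed at a state `b`, making it
the reference point, and a different player subsequently also stays at `b`. -/
def TerminalStay (G : Game n) (a0 : Profile G) (h : Hist G) : Prop :=
  ∃ (h' : Hist G) (m : Move G) (i : Fin n),
    h = h' ++ [m] ∧ IsStay G a0 h' m ∧ refpt G a0 h' = state G a0 h' ∧
    proposer G a0 h' = some i ∧ i ≠ m.1

/-- Termination condition (ii): all `n` players consecutively pass
(the last `n` moves are passes and every player is among their movers). -/
def TerminalPass (G : Game n) (h : Hist G) : Prop :=
  n ≤ h.length ∧ (∀ m ∈ h.drop (h.length - n), m.2 = none) ∧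
    (∀ i : Fin n, ∃ m ∈ h.drop (h.length - n), m.1 = i)

/-- Terminal nodes of `Γ(a0,·,·)`. -/
def Terminal (G : Game n) (a0 : Profile G) (h : Hist G) : Prop :=
  TerminalStay G a0 h ∨ TerminalPass G h

/-- Number of predecessor nodes of `h` having the same state as `h` at which
the move `m` was made. -/
def countAct (G : Game n) (a0 : Profile G) (h : Hist G) (m : Move G) : ℕ :=
  ((Finset.range h.length).filter
    (fun t => h[t]? = some m ∧ state G a0 (h.take t) = state G a0 h)).card

/-- Availability of the choice `c` for player `i` at node `h`: pass is always
available, and an action `a` is available iff `i` has chosen `a` at fewer than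
`k` predecessor nodes carrying the same state as `h`. -/
def availAct (G : Game n) (a0 : Profile G) (k : ℕ) (h : Hist G) {i : Fin n}
    (c : Option (G.A i)) : Prop :=
  ∀ a : G.A i, c = some a → countAct G a0 h ⟨i, some a⟩ < k

/-- `h` is a (valid) node of the game tree of `Γ(a0,k,I)`: at each step the
recorded mover is the active player given by the player function `I`, the
chosen action was available, and no proper predecessor is terminal. -/
structure IsNode (G : Game n) (a0 : Profile G) (k : ℕ) (I : Hist G → Fin n)
    (h : Hist G) : Prop where
  mover : ∀ (t : ℕ) (ht : t < h.length), (h.get ⟨t, ht⟩).1 = I (h.take t)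
  avail : ∀ (t : ℕ) (ht : t < h.length), availAct G a0 k (h.take t) (h.get ⟨t, ht⟩).2
  nonterm : ∀ t < h.length, ¬ Terminal G a0 (h.take t)

/-- The player function is admissible: along every path of play the numbers of
nodes at which any two players have been active differ by at most one. -/
def Admissible (G : Game n) (a0 : Profile G) (k : ℕ) (I : Hist G → Fin n) : Prop :=
  ∀ h, IsNode G a0 k I h → ∀ i j : Fin n,
    (h.map Sigma.fst).count i ≤ (h.map Sigma.fst).count j + 1

/-- A pure strategy of player `i`: a choice (pass or an action) at every node. -/
abbrev Strategy (G : Game n) (i : Fin n) : Type := Hist G → Option (G.A i)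

/-- A pure strategy profile. -/
abbrev StratProfile (G : Game n) : Type := ∀ i, Strategy G i

/-- A strategy profile is valid if at every non-terminal node of the tree the
active player's prescribed choice is available. -/
def ValidProfile (G : Game n) (a0 : Profile G) (k : ℕ) (I : Hist G → Fin n)
    (σ : StratProfile G) : Prop :=
  ∀ h, IsNode G a0 k I h → ¬ Terminal G a0 h → availAct G a0 k h (σ (I h) h)

open Classical in
/-- Play according to `σ` for (at most) the given number of steps from a node,
stopping at terminal nodes. -/
noncomputable def playN (G : Game n) (a0 : Profile G) (I : Hist G → Fin n)
    (σ : StratProfile G) : ℕ → Hist G → Hist G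
  | 0, h => h
  | (t + 1), h =>
    if Terminal G a0 h then h
    else playN G a0 I σ t (h ++ [⟨I h, σ (I h) h⟩])

/-- A (generous) upper bound for the length of any play of `Γ(a0,k,I)`. -/
def bound (G : Game n) (k : ℕ) : ℕ :=
  ((k + 2) * (Fintype.card (Profile G) + 2) * ((∑ i, Fintype.card (G.A i)) + 2) + 2)
    * (n + 2) * 4

/-- The outcome of `σ` in the subgame rooted at `h`: the reference point at the
terminal node reached by playing `σ` from `h`. -/
noncomputable def outcomeFrom (G : Game n) (a0 : Profile G) (k : ℕ)
    (I : Hist G → Fin n) (σ : StratProfile G) (h : Hist G) : Profile G :=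
  refpt G a0 (playN G a0 I σ (bound G k + 1) h)

/-- The outcome of the strategy profile `σ` in `Γ(a0,k,I)`. -/
noncomputable def outcome (G : Game n) (a0 : Profile G) (k : ℕ)
    (I : Hist G → Fin n) (σ : StratProfile G) : Profile G :=
  outcomeFrom G a0 k I σ []

/-- `σ` satisfies the no-harm principle: every stay action it prescribes, at
every (on- or off-path) non-terminal node of the tree, does not harm any other
player relative to the reference point at that node. -/
def SatNHP (G : Game n) (a0 : Profile G) (k : ℕ) (I : Hist G → Fin n)
    (σ : StratProfile G) : Prop :=
  ∀ h, IsNode G a0 k I h → ¬ Terminal G a0 h →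
    σ (I h) h = some (state G a0 h (I h)) →
    ∀ j, j ≠ I h → G.u j (refpt G a0 h) ≤ G.u j (state G a0 h)

/-- No-harm equilibrium of `Γ(a0,k,I)`: a valid strategy profile satisfying the
NHP such that at every non-terminal node the active player's choice is a best
response among deviations keeping the profile valid and NHP-compliant. -/
def NHE (G : Game n) (a0 : Profile G) (k : ℕ) (I : Hist G → Fin n)
    (σ : StratProfile G) : Prop :=
  ValidProfile G a0 k I σ ∧ SatNHP G a0 k I σ ∧
  ∀ h, IsNode G a0 k I h → ¬ Terminal G a0 h →
    ∀ τ : Strategy G (I h),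
      ValidProfile G a0 k I (Function.update σ (I h) τ) →
      SatNHP G a0 k I (Function.update σ (I h) τ) →
      G.u (I h) (outcomeFrom G a0 k I (Function.update σ (I h) τ) h) ≤
        G.u (I h) (outcomeFrom G a0 k I σ h)

/-- Subgame perfect equilibrium of `Γ(a0,k,I)` (no NHP constraint). -/
def SPE (G : Game n) (a0 : Profile G) (k : ℕ) (I : Hist G → Fin n)
    (σ : StratProfile G) : Prop :=
  ValidProfile G a0 k I σ ∧
  ∀ h, IsNode G a0 k I h → ¬ Terminal G a0 h →
    ∀ τ : Strategy G (I h),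
      ValidProfile G a0 k I (Function.update σ (I h) τ) →
      G.u (I h) (outcomeFrom G a0 k I (Function.update σ (I h) τ) h) ≤
        G.u (I h) (outcomeFrom G a0 k I σ h)

/-- `b` Pareto dominates `a`. -/
def ParetoDom (G : Game n) (b a : Profile G) : Prop :=
  (∀ i, G.u i a ≤ G.u i b) ∧ ∃ i, G.u i a < G.u i b

/-- `a` is Pareto optimal. -/
def ParetoOpt (G : Game n) (a : Profile G) : Prop := ∀ b, ¬ ParetoDom G b a

/-- `b` strictly Pareto dominates `a`. -/
def StrictDom (G : Game n) (b a : Profile G) : Prop := ∀ i, G.u i a < G.u i b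

/-- `a` is weakly Pareto optimal. -/
def WeakParetoOpt (G : Game n) (a : Profile G) : Prop := ∀ b, ¬ StrictDom G b a

/-- Preferences are strict: each utility function is injective on profiles. -/
def StrictPrefs (G : Game n) : Prop := ∀ i, Function.Injective (G.u i)

/-!
Along a play the reference point changes only when a player stays, and by the no-harm principle
such a change never hurts the other players. A player about to move can secure the current
reference point by passing for the rest of the game, since then only the others stay; so in a
no-harm equilibrium every player weakly prefers the outcome of every subgame to its reference
point. At the root this gives `u i a0 ≤ u i a'`, and strict preferences with `a' ≠ a0` make it
strict.

This needs every play to end within `bound G k` moves: an admissible player function makes every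
player move exactly once in each aligned block of `n` moves, so a non-terminal block contains a
non-pass move, and availability allows each move at a given state at most `k` times.
-/

section Play

variable {G : Game n} {a0 : Profile G} {k : ℕ} {I : Hist G → Fin n} {σ : StratProfile G}
  {h : Hist G}

lemma fold3_append_singleton (m : Move G) :
    fold3 G a0 (h ++ [m]) = stepFold G (fold3 G a0 h) m := by
  simp [fold3]

lemma refpt_append_of_isStay {m : Move G} (hm : IsStay G a0 h m) :
    refpt G a0 (h ++ [m]) = state G a0 h := by
  obtain ⟨i, c⟩ := m
  simp only [IsStay] at hm
  subst hm
  simp [state, refpt, fold3_append_singleton, stepFold]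

lemma refpt_append_of_not_isStay {m : Move G} (hm : ¬ IsStay G a0 h m) :
    refpt G a0 (h ++ [m]) = refpt G a0 h := by
  obtain ⟨i, _ | a⟩ := m
  · simp [refpt, fold3_append_singleton, stepFold]
  · have ha : a ≠ (fold3 G a0 h).1 i := fun e => hm (by rw [IsStay, state, e])
    simp [refpt, fold3_append_singleton, stepFold, ha]

lemma playN_of_terminal (hT : Terminal G a0 h) (t : ℕ) : playN G a0 I σ t h = h := by
  cases t <;> simp [playN, hT]

lemma playN_succ_of_not_terminal (hT : ¬ Terminal G a0 h) (t : ℕ) :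
    playN G a0 I σ (t + 1) h = playN G a0 I σ t (h ++ [⟨I h, σ (I h) h⟩]) := by
  simp [playN, hT]

lemma playN_add (s t : ℕ) (h : Hist G) :
    playN G a0 I σ (s + t) h = playN G a0 I σ t (playN G a0 I σ s h) := by
  induction s generalizing h with
  | zero => rw [Nat.zero_add]; rfl
  | succ s ih =>
    by_cases hT : Terminal G a0 h
    · simp only [playN_of_terminal hT]
    · rw [Nat.add_right_comm, playN_succ_of_not_terminal hT, playN_succ_of_not_terminal hT, ih]

lemma playN_eq_of_terminal {s t : ℕ} (hs : Terminal G a0 (playN G a0 I σ s h))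
    (ht : Terminal G a0 (playN G a0 I σ t h)) :
    playN G a0 I σ s h = playN G a0 I σ t h := by
  rcases le_total s t with hst | hts
  · rw [← Nat.add_sub_cancel' hst, playN_add, playN_of_terminal hs]
  · rw [← Nat.add_sub_cancel' hts, playN_add, playN_of_terminal ht]

lemma length_playN {t : ℕ} (hT : ¬ Terminal G a0 (playN G a0 I σ t h)) :
    (playN G a0 I σ t h).length = h.length + t := by
  induction t generalizing h with
  | zero => rfl
  | succ t ih =>
    have hTh : ¬ Terminal G a0 h := fun hTh => hT (by rwa [playN_of_terminal hTh])
    rw [playN_succ_of_not_terminal hTh] at hT ⊢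
    rw [ih hT, List.length_append, List.length_singleton, Nat.add_right_comm, Nat.add_assoc]

lemma isNode_nil : IsNode G a0 k I [] :=
  ⟨nofun, nofun, nofun⟩

lemma IsNode.take (hh : IsNode G a0 k I h) (s : ℕ) : IsNode G a0 k I (h.take s) := by
  refine ⟨fun t ht => ?_, fun t ht => ?_, fun t ht => ?_⟩ <;>
    rw [List.length_take, Nat.lt_min] at ht <;>
    rw [List.take_take, min_eq_left_of_lt ht.1]
  · simpa using hh.mover t ht.2
  · rw [List.get_eq_getElem, List.getElem_take]
    exact hh.avail t ht.2
  · exact hh.nonterm t ht.2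

lemma IsNode.append_singleton (hh : IsNode G a0 k I h) (hT : ¬ Terminal G a0 h)
    {c : Option (G.A (I h))} (hc : availAct G a0 k h c) :
    IsNode G a0 k I (h ++ [⟨I h, c⟩]) := by
  refine ⟨fun t ht => ?_, fun t ht => ?_, fun t ht => ?_⟩ <;>
    rw [List.length_append, List.length_singleton, Nat.lt_succ_iff] at ht <;>
    rcases ht.lt_or_eq with ht | rfl
  · simpa [List.getElem_append_left ht, List.take_append_of_le_length ht.le] using hh.mover t ht
  · simp
  · rw [List.get_eq_getElem, List.getElem_append_left ht, List.take_append_of_le_length ht.le]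
    exact hh.avail t ht
  · rw [List.get_eq_getElem, List.getElem_concat_length rfl, List.take_left' rfl]
    exact hc
  · simpa [List.take_append_of_le_length ht.le] using hh.nonterm t ht
  · simpa using hT

lemma IsNode.playN (hV : ValidProfile G a0 k I σ) (hh : IsNode G a0 k I h) (t : ℕ) :
    IsNode G a0 k I (playN G a0 I σ t h) := by
  induction t generalizing h with
  | zero => exact hh
  | succ t ih =>
    by_cases hT : Terminal G a0 h
    · rwa [playN_of_terminal hT]
    · rw [playN_succ_of_not_terminal hT]
      exact ih (hh.append_singleton hT (hV h hh hT))

end Play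

section Termination

open Finset

variable {G : Game n} {a0 : Profile G} {k : ℕ} {I : Hist G → Fin n} {h : Hist G}

lemma eq_of_forall_le_add_one_of_sum_eq {ι : Type*} [Fintype ι] {c : ι → ℕ} {q : ℕ}
    (hc : ∀ i j, c i ≤ c j + 1) (hsum : ∑ i, c i = Fintype.card ι * q) (i : ι) : c i = q := by
  have hsum' : ∑ j, c j = ∑ _j : ι, q := by simp [hsum]
  by_contra hne
  rcases lt_or_gt_of_ne hne with hlt | hgt
  · have : ∑ j, c j < ∑ _j : ι, q :=
      sum_lt_sum (fun j _ => (hc j i).trans hlt) ⟨i, mem_univ i, hlt⟩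
    omega
  · have : ∑ _j : ι, q < ∑ j, c j :=
      sum_lt_sum (fun j _ => Nat.le_of_lt_succ (hgt.trans_le (hc i j))) ⟨i, mem_univ i, hgt⟩
    omega

lemma Admissible.count_movers_eq (hI : Admissible G a0 k I) (hh : IsNode G a0 k I h)
    {q : ℕ} (hlen : h.length = n * q) (i : Fin n) : (h.map Sigma.fst).count i = q := by
  refine eq_of_forall_le_add_one_of_sum_eq (hI h hh) ?_ i
  rw [Fintype.card_fin, ← hlen, ← List.length_map Sigma.fst]
  simpa using Multiset.sum_count_eq_card (s := univ)
    (m := ((h.map Sigma.fst : List (Fin n)) : Multiset (Fin n))) (by simp)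

lemma Admissible.exists_mem_drop_mover_eq (hI : Admissible G a0 k I) (hh : IsNode G a0 k I h)
    {q : ℕ} (hlen : h.length = n * (q + 1)) (i : Fin n) : ∃ m ∈ h.drop (n * q), m.1 = i := by
  have hq : n * q ≤ h.length := hlen ▸ Nat.mul_le_mul_left n q.le_succ
  have hfull := hI.count_movers_eq hh hlen i
  rw [← List.take_append_drop (n * q) h, List.map_append, List.count_append,
    hI.count_movers_eq (hh.take _) (q := q) (by simp [hq]) i] at hfull
  have hpos : 0 < ((h.drop (n * q)).map Sigma.fst).count i := by omega
  obtain ⟨m, hm, rfl⟩ := List.mem_map.mp (List.count_pos_iff.mp hpos)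
  exact ⟨m, hm, rfl⟩

lemma Admissible.exists_action_mem_drop (hI : Admissible G a0 k I) (hh : IsNode G a0 k I h)
    (hT : ¬ Terminal G a0 h) {q : ℕ} (hlen : h.length = n * (q + 1)) :
    ∃ m ∈ h.drop (n * q), m.2 ≠ none := by
  have hwin : h.length - n = n * q := by rw [hlen, Nat.mul_succ, Nat.add_sub_cancel]
  by_contra! hpass
  refine hT (Or.inr ⟨hlen ▸ Nat.le_mul_of_pos_right n q.succ_pos, ?_, ?_⟩) <;> rw [hwin]
  · exact hpass
  · exact hI.exists_mem_drop_mover_eq hh hlen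

open Classical in
def actionIndices (h : Hist G) : Finset ℕ :=
  {r ∈ range h.length | ∃ m, h[r]? = some m ∧ m.2 ≠ none}

lemma Admissible.exists_mem_actionIndices_div_eq (hI : Admissible G a0 k I)
    (hh : IsNode G a0 k I h) (hT : ¬ Terminal G a0 h) {q : ℕ} (hq : n * (q + 1) ≤ h.length) :
    ∃ r ∈ actionIndices h, r / n = q := by
  have hprefix : ¬ Terminal G a0 (h.take (n * (q + 1))) := by
    rcases hq.lt_or_eq with hlt | heq
    · exact hh.nonterm _ hlt
    · rwa [heq, List.take_length]
  obtain ⟨m, hm, hact⟩ := hI.exists_action_mem_drop (hh.take _) hprefix (q := q) (by simp [hq])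
  obtain ⟨j, hj, rfl⟩ := List.getElem_of_mem hm
  rw [List.length_drop, List.length_take, min_eq_left hq, Nat.mul_succ,
    Nat.add_sub_cancel_left] at hj
  refine ⟨n * q + j, ?_, Nat.div_eq_of_lt_le (by rw [Nat.mul_comm]; omega) ?_⟩
  · have hlt : n * q + j < h.length := by rw [Nat.mul_succ] at hq; omega
    simp only [actionIndices, mem_filter, mem_range]
    refine ⟨hlt, _, ?_, hact⟩
    rw [List.getElem_drop, List.getElem_take]
    exact List.getElem?_eq_getElem hlt
  · rw [Nat.mul_comm, Nat.succ_mul]; omega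

lemma countAct_take {s : ℕ} (hs : s ≤ h.length) (m : Move G) :
    countAct G a0 (h.take s) m =
      #{t ∈ range s | h[t]? = some m ∧ state G a0 (h.take t) = state G a0 (h.take s)} := by
  rw [countAct, List.length_take, min_eq_left hs]
  congr 1
  refine filter_congr fun t ht => ?_
  rw [mem_range] at ht
  rw [List.getElem?_take, if_pos ht, List.take_take, min_eq_left ht.le]

lemma IsNode.card_filter_actionIndices_le (hh : IsNode G a0 k I h) (b : Profile G)
    (m : Move G) :
    #{r ∈ actionIndices h | h[r]? = some m ∧ state G a0 (h.take r) = b} ≤ k := by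
  set F := {r ∈ actionIndices h | h[r]? = some m ∧ state G a0 (h.take r) = b}
  rcases F.eq_empty_or_nonempty with hF | hF
  · simp [hF]
  -- At the last index `s` of `F`, the other indices are earlier uses of `m` at the same state.
  have hlast := F.max'_mem hF
  set s := F.max' hF
  have hsub : F.erase s ⊆ {t ∈ range s | h[t]? = some m ∧ state G a0 (h.take t) = b} := by
    intro r hr
    obtain ⟨hrs, hrF⟩ := mem_erase.mp hr
    exact mem_filter.mpr ⟨mem_range.mpr ((F.le_max' r hrF).lt_of_ne hrs), (mem_filter.mp hrF).2⟩
  obtain ⟨⟨hs, m', hsm', hact⟩, hsm, hsb⟩ := by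
    simpa only [F, actionIndices, mem_filter, mem_range] using hlast
  obtain rfl : m = m' := Option.some.inj (hsm.symm.trans hsm')
  obtain ⟨i, _ | a⟩ := m
  · exact absurd rfl hact
  have hget : h.get ⟨s, hs⟩ = ⟨i, some a⟩ := by simpa [List.getElem?_eq_getElem hs] using hsm
  have havail := hh.avail s hs
  rw [hget] at havail
  have hcount : countAct G a0 (h.take s) ⟨i, some a⟩ < k := havail a rfl
  rw [countAct_take hs.le, hsb] at hcount
  have := card_le_card hsub
  rw [card_erase_of_mem hlast] at this
  omega

lemma IsNode.card_actionIndices_le (hh : IsNode G a0 k I h) :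
    #(actionIndices h) ≤ k * Fintype.card (Profile G × Option (Move G)) := by
  classical
  rw [← card_univ]
  refine card_le_mul_card_image_of_maps_to (f := fun r => (state G a0 (h.take r), h[r]?))
    (fun _ _ => mem_univ _) k ?_
  rintro ⟨b, _ | m⟩ -
  · refine (card_eq_zero.mpr (filter_eq_empty_iff.mpr fun r hr hrb => ?_)).trans_le k.zero_le
    obtain ⟨-, m, hm, -⟩ := mem_filter.mp hr
    simp [hm] at hrb
  · simpa only [Prod.mk.injEq, and_comm] using hh.card_filter_actionIndices_le b m

lemma Admissible.length_lt (hI : Admissible G a0 k I) (hh : IsNode G a0 k I h)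
    (hT : ¬ Terminal G a0 h) :
    h.length < n * (k * Fintype.card (Profile G × Option (Move G)) + 1) := by
  by_contra! hlen
  have hsub : range (k * Fintype.card (Profile G × Option (Move G)) + 1) ⊆
      (actionIndices h).image (· / n) := fun q hq => by
    obtain ⟨r, hr, hrq⟩ := hI.exists_mem_actionIndices_div_eq hh hT
      ((Nat.mul_le_mul_left n (mem_range.mp hq)).trans hlen)
    exact mem_image.mpr ⟨r, hr, hrq⟩
  have := (card_le_card hsub).trans card_image_le
  rw [card_range] at this
  have := hh.card_actionIndices_le
  omega

lemma mul_card_add_one_le_bound (G : Game n) (k : ℕ) :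
    n * (k * Fintype.card (Profile G × Option (Move G)) + 1) ≤ bound G k := by
  have hS : n ≤ ∑ i, Fintype.card (G.A i) := by
    simpa using card_nsmul_le_sum univ (fun i => Fintype.card (G.A i)) 1
      fun i _ => Fintype.card_pos
  have hM : Fintype.card (Option (Move G)) = (∑ i, Fintype.card (G.A i)) + n + 1 := by
    simp [Fintype.card_sigma, sum_add_distrib]
  rw [Fintype.card_prod, hM, bound]
  generalize ∑ i, Fintype.card (G.A i) = S at *
  generalize Fintype.card (Profile G) = C
  nlinarith [Nat.zero_le (k * C * S * n), Nat.zero_le (k * C * S), Nat.zero_le (k * C * n),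
    Nat.zero_le (k * S * n), Nat.zero_le (C * S * n), Nat.zero_le (k * C)]

lemma Admissible.terminal_playN_bound (hI : Admissible G a0 k I) {σ : StratProfile G}
    (hV : ValidProfile G a0 k I σ) (hh : IsNode G a0 k I h) :
    Terminal G a0 (playN G a0 I σ (bound G k + 1) h) := by
  by_contra hT
  have := hI.length_lt (hh.playN hV _) hT
  rw [length_playN hT] at this
  have := mul_card_add_one_le_bound G k
  omega

end Termination

section Equilibrium

variable {G : Game n} {a0 : Profile G} {k : ℕ} {I : Hist G → Fin n} {σ : StratProfile G}
  {h : Hist G}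

lemma SatNHP.utility_refpt_le_append (hN : SatNHP G a0 k I σ) (hh : IsNode G a0 k I h)
    (hT : ¬ Terminal G a0 h) {i : Fin n} (hi : σ (I h) h = some (state G a0 h (I h)) → I h ≠ i) :
    G.u i (refpt G a0 h) ≤ G.u i (refpt G a0 (h ++ [⟨I h, σ (I h) h⟩])) := by
  by_cases hstay : IsStay G a0 h ⟨I h, σ (I h) h⟩
  · rw [refpt_append_of_isStay hstay]
    exact hN h hh hT hstay i (hi hstay).symm
  · rw [refpt_append_of_not_isStay hstay]

lemma ValidProfile.update_pass (hV : ValidProfile G a0 k I σ) (i : Fin n) :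
    ValidProfile G a0 k I (Function.update σ i fun _ => none) := by
  intro h hh hT
  by_cases hi : I h = i
  · subst hi
    rw [Function.update_self]
    exact nofun
  · rw [Function.update_of_ne hi]
    exact hV h hh hT

lemma SatNHP.update_pass (hN : SatNHP G a0 k I σ) (i : Fin n) :
    SatNHP G a0 k I (Function.update σ i fun _ => none) := by
  intro h hh hT hstay
  by_cases hi : I h = i
  · rw [hi, Function.update_self] at hstay
    cases hstay
  · rw [Function.update_of_ne hi] at hstay
    exact hN h hh hT hstay

lemma SatNHP.utility_refpt_le_playN_of_pass (hV : ValidProfile G a0 k I σ)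
    (hN : SatNHP G a0 k I σ) {i : Fin n} (hpass : ∀ h, σ i h = none) (hh : IsNode G a0 k I h)
    (t : ℕ) : G.u i (refpt G a0 h) ≤ G.u i (refpt G a0 (playN G a0 I σ t h)) := by
  induction t generalizing h with
  | zero => exact le_rfl
  | succ t ih =>
    by_cases hT : Terminal G a0 h
    · rw [playN_of_terminal hT]
    rw [playN_succ_of_not_terminal hT]
    refine (hN.utility_refpt_le_append hh hT fun hstay hi => ?_).trans
      (ih (hh.append_singleton hT (hV h hh hT)))
    rw [hi, hpass] at hstay
    cases hstay

lemma NHE.utility_refpt_le_outcomeFrom_of_active (hσ : NHE G a0 k I σ)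
    (hh : IsNode G a0 k I h) (hT : ¬ Terminal G a0 h) :
    G.u (I h) (refpt G a0 h) ≤ G.u (I h) (outcomeFrom G a0 k I σ h) := by
  obtain ⟨hV, hN, hbest⟩ := hσ
  refine le_trans ?_ (hbest h hh hT _ (hV.update_pass _) (hN.update_pass _))
  exact (hN.update_pass _).utility_refpt_le_playN_of_pass (hV.update_pass _)
    (fun _ => by rw [Function.update_self]) hh _

lemma NHE.utility_refpt_le_outcomeFrom (hσ : NHE G a0 k I σ) (hI : Admissible G a0 k I)
    (hh : IsNode G a0 k I h) (i : Fin n) :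
    G.u i (refpt G a0 h) ≤ G.u i (outcomeFrom G a0 k I σ h) := by
  have ⟨hV, hN, _⟩ := hσ
  suffices key : ∀ t h, IsNode G a0 k I h → Terminal G a0 (playN G a0 I σ t h) →
      G.u i (refpt G a0 h) ≤ G.u i (refpt G a0 (playN G a0 I σ t h)) from
    key _ h hh (hI.terminal_playN_bound hV hh)
  intro t
  induction t with
  | zero => exact fun _ _ _ => le_rfl
  | succ t ih =>
    intro h hh hTt
    by_cases hT : Terminal G a0 h
    · rw [playN_of_terminal hT]
    by_cases hi : I h = i
    · -- both plays from `h` have ended, so they reach the same terminal node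
      subst hi
      rw [← playN_eq_of_terminal (hI.terminal_playN_bound hV hh) hTt]
      exact hσ.utility_refpt_le_outcomeFrom_of_active hh hT
    · rw [playN_succ_of_not_terminal hT] at hTt ⊢
      exact (hN.utility_refpt_le_append hh hT fun _ => hi).trans
        (ih _ (hh.append_singleton hT (hV h hh hT)) hTt)

end Equilibrium

theorem nhe_outcome_ne_ref_strict_improvement_general {n : ℕ} (hn : 2 ≤ n) (G : Game n)
    (hG : StrictPrefs G) (a0 : Profile G) (k : ℕ)
    (I : Hist G → Fin n) (hI : Admissible G a0 k I) (σ : StratProfile G)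
    (hσ : NHE G a0 k I σ) (a' : Profile G) (ha' : outcome G a0 k I σ = a')
    (hne : a' ≠ a0) :
    (∀ i, G.u i a0 < G.u i a') ∧ ParetoDom G a' a0 := by
  have hle : ∀ i, G.u i a0 ≤ G.u i a' := fun i =>
    ha' ▸ hσ.utility_refpt_le_outcomeFrom hI isNode_nil i
  have hlt : ∀ i, G.u i a0 < G.u i a' := fun i =>
    (hle i).lt_of_ne fun e => hne (hG i e).symm
  exact ⟨hlt, fun i => (hlt i).le, ⟨0, by omega⟩, hlt _⟩

/-- If `σ` is a no-harm equilibrium of `Γ(a0,k,I)` whose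
outcome `a'` differs from the initial reference point `a0`, then every player
is strictly better off at `a'` than at `a0`; in particular `a'` Pareto
dominates `a0`. -/
theorem nhe_outcome_ne_ref_strict_improvement {n : ℕ} (hn : 2 ≤ n) (G : Game n)
    (hG : StrictPrefs G) (a0 : Profile G) (k : ℕ) (hk : 0 < k)
    (I : Hist G → Fin n) (hI : Admissible G a0 k I) (σ : StratProfile G)
    (hσ : NHE G a0 k I σ) (a' : Profile G) (ha' : outcome G a0 k I σ = a')
    (hne : a' ≠ a0) :
    (∀ i, G.u i a0 < G.u i a') ∧ ParetoDom G a' a0 :=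
  nhe_outcome_ne_ref_strict_improvement_general hn G hG a0 k I hI σ hσ a' ha' hne

end NoHarm
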